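/- For every α ∈ (0,2) and every integer n ∈ ℤ, one has (1/(2π)) ∫_{−π}^{π} e^{−i n η} (4 sin²(η/2))^{α/2} dη = (−1)^n Γ(α+1) / (Γ(α/2 + n + 1) Γ(α/2 − n + 1)). In particular this quantity is real. -/

import Mathlib

/-!
Write `g(η) = (4 sin² (η/2))^{α/2} = |2 sin (η/2)|^α` and `A_m = ∫_{-π}^{π} e^{-imη} g(η) dη`.
Away from `η = 0` the logarithmic derivative of `g` is `(α/2) cot (η/2)`, and
`(e^{iη} - 1) cot (η/2) = i (e^{iη} + 1)`. Hence the `2π`-periodic function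
`(e^{-i(n-1)η} - e^{-inη}) g(η)` has derivative
`i (1 - n + α/2) e^{-i(n-1)η} g + i (n + α/2) e^{-inη} g`, and integrating over a period gives the
first-order recurrence `(n + α/2) A_n = (n - 1 - α/2) A_{n-1}`. The closed form satisfies the same
recurrence by `Γ(s + 1) = s Γ(s)`, whose coefficients do not vanish in the directions needed to
propagate from `n = 0`. The value at `n = 0` follows from the substitution `x = sin² (η/2)`, which
turns `A_0` into a Beta integral, and Legendre's duplication formula.
-/

open MeasureTheory Real

noncomputable section

/-- The finite difference weight `a_n^{(α)} = (1/(2π)) ∫_{-π}^{π} e^{-inη} (4 sin²(η/2))^{α/2} dη`. -/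
def aWeightC (α : ℝ) (n : ℤ) : ℂ :=
  (1 / (2 * Real.pi)) • ∫ η in (-Real.pi)..Real.pi,
    Complex.exp (-Complex.I * (n : ℂ) * (η : ℂ)) *
      (((4 * Real.sin (η / 2) ^ 2) ^ (α / 2) : ℝ) : ℂ)

open intervalIntegral Set
open scoped Complex
open Complex (I)

lemma Real.inv_Gamma_eq_mul_inv_Gamma_add_one (s : ℝ) : (Gamma s)⁻¹ = s * (Gamma (s + 1))⁻¹ := by
  rcases ne_or_eq s 0 with hs | rfl
  · rw [Gamma_add_one hs, mul_inv, mul_inv_cancel_left₀ hs]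
  · rw [zero_add, Gamma_zero, inv_zero, zero_mul]

lemma Int.eq_of_first_order_recurrence {M₀ : Type*} [MonoidWithZero M₀] [IsLeftCancelMulZero M₀]
    {c d u v : ℤ → M₀}
    (hc : ∀ n, 0 < n → c n ≠ 0) (hd : ∀ n ≤ 0, d n ≠ 0)
    (hu : ∀ n, c n * u n = d n * u (n - 1)) (hv : ∀ n, c n * v n = d n * v (n - 1))
    (h₀ : u 0 = v 0) : u = v := by
  funext n
  induction n using Int.induction_on with
  | zero => exact h₀
  | succ k ih =>
    refine mul_left_cancel₀ (hc ((k : ℤ) + 1) (by omega)) ?_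
    rw [hu, hv, add_sub_cancel_right, ih]
  | pred k ih =>
    refine mul_left_cancel₀ (hd (-k : ℤ) (by omega)) ?_
    rw [← hu, ← hv, ih]

lemma integral_Ioo_rpow_mul_one_sub_rpow {u v : ℝ} (hu : 0 < u) (hv : 0 < v) :
    ∫ x in Ioo (0 : ℝ) 1, x ^ (u - 1) * (1 - x) ^ (v - 1) = Gamma u * Gamma v / Gamma (u + v) := by
  have hbeta := Complex.betaIntegral_eq_Gamma_mul_div u v (by simpa) (by simpa)
  rw [Complex.betaIntegral, intervalIntegral.integral_of_le zero_le_one,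
    integral_Ioc_eq_integral_Ioo, ← Complex.ofReal_add, Complex.Gamma_ofReal,
    Complex.Gamma_ofReal, Complex.Gamma_ofReal] at hbeta
  rw [← Complex.ofReal_inj, ← integral_complex_ofReal, Complex.ofReal_div, Complex.ofReal_mul,
    ← hbeta]
  refine setIntegral_congr_fun measurableSet_Ioo fun x hx => ?_
  rw [Complex.ofReal_mul, Complex.ofReal_cpow hx.1.le, Complex.ofReal_cpow (sub_nonneg.2 hx.2.le)]
  push_cast
  ring

lemma strictMonoOn_sin_half_sq : StrictMonoOn (fun θ : ℝ => sin (θ / 2) ^ 2) (Icc 0 π) := by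
  intro x hx y hy hxy
  have hsin : sin (x / 2) < sin (y / 2) :=
    strictMonoOn_sin ⟨by linarith [hx.1, pi_pos], by linarith [hx.2]⟩
      ⟨by linarith [hy.1, pi_pos], by linarith [hy.2]⟩ (by linarith)
  exact pow_lt_pow_left₀ hsin (sin_nonneg_of_nonneg_of_le_pi (by linarith [hx.1])
    (by linarith [hx.2, pi_pos])) two_ne_zero

lemma image_sin_half_sq_Ioo : (fun θ : ℝ => sin (θ / 2) ^ 2) '' Ioo 0 π = Ioo 0 1 := by
  refine subset_antisymm ?_ ?_
  · rintro _ ⟨θ, hθ, rfl⟩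
    have h0 := strictMonoOn_sin_half_sq (left_mem_Icc.2 pi_pos.le) (Ioo_subset_Icc_self hθ) hθ.1
    have h1 := strictMonoOn_sin_half_sq (Ioo_subset_Icc_self hθ) (right_mem_Icc.2 pi_pos.le) hθ.2
    simp_all
  · simpa using intermediate_value_Ioo pi_pos.le
      (by fun_prop : ContinuousOn (fun θ : ℝ => sin (θ / 2) ^ 2) (Icc 0 π))

lemma integral_sin_half_rpow {a : ℝ} (ha : -1 < a) :
    ∫ θ in Ioo 0 π, sin (θ / 2) ^ a = Gamma ((a + 1) / 2) * √π / Gamma (a / 2 + 1) := by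
  have hderiv (θ : ℝ) : HasDerivAt (fun θ : ℝ => sin (θ / 2) ^ 2)
      (sin (θ / 2) * cos (θ / 2)) θ := by
    refine (((hasDerivAt_id θ).div_const 2).sin.fun_pow 2).congr_deriv ?_
    simp only [id]
    ring
  rw [← Gamma_one_half_eq, show a / 2 + 1 = (a + 1) / 2 + 1 / 2 by ring,
    ← integral_Ioo_rpow_mul_one_sub_rpow (by linarith) one_half_pos, ← image_sin_half_sq_Ioo,
    integral_image_eq_integral_abs_deriv_smul measurableSet_Ioo
      (fun θ _ => (hderiv θ).hasDerivWithinAt)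
      (strictMonoOn_sin_half_sq.injOn.mono Ioo_subset_Icc_self)]
  refine setIntegral_congr_fun measurableSet_Ioo fun θ hθ => ?_
  have hs : 0 < sin (θ / 2) :=
    sin_pos_of_pos_of_lt_pi (by linarith [hθ.1]) (by linarith [hθ.2, pi_pos])
  have hc : 0 < cos (θ / 2) :=
    cos_pos_of_mem_Ioo ⟨by linarith [hθ.1, pi_pos], by linarith [hθ.2]⟩
  have hsin : (sin (θ / 2) ^ 2) ^ ((a + 1) / 2 - 1) = sin (θ / 2) ^ a * (sin (θ / 2))⁻¹ := by
    rw [← rpow_natCast, ← rpow_mul hs.le, ← rpow_neg_one, ← rpow_add hs]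
    congr 1
    push_cast
    ring
  have hcos : (1 - sin (θ / 2) ^ 2) ^ ((1 : ℝ) / 2 - 1) = (cos (θ / 2))⁻¹ := by
    rw [← cos_sq', ← rpow_natCast, ← rpow_mul hc.le, ← rpow_neg_one]
    norm_num
  rw [smul_eq_mul, hsin, hcos, abs_of_pos (mul_pos hs hc)]
  field_simp

/-- With `w = exp (iη/2) = cos (η/2) + i sin (η/2)`: `w² - 1 = 2i sin (η/2) w` and
`w² + 1 = 2 cos (η/2) w`. -/
lemma exp_I_sub_one_mul_cot_half {η : ℝ} (h : sin (η / 2) ≠ 0) :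
    (cexp (I * η) - 1) * ((cos (η / 2) / sin (η / 2) : ℝ) : ℂ) = I * (cexp (I * η) + 1) := by
  have hw : cexp (I * η) = (cos (η / 2) + sin (η / 2) * I) ^ 2 := by
    rw [Complex.ofReal_cos, Complex.ofReal_sin, ← Complex.exp_mul_I, ← Complex.exp_nat_mul]
    push_cast
    ring_nf
  have hpyth : (cos (η / 2) : ℂ) ^ 2 + (sin (η / 2) : ℂ) ^ 2 = 1 := by
    exact_mod_cast cos_sq_add_sin_sq (η / 2)
  have hs : (sin (η / 2) : ℂ) ≠ 0 := by exact_mod_cast h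
  rw [hw, Complex.ofReal_div]
  generalize (cos (η / 2) : ℂ) = c, (sin (η / 2) : ℂ) = s at hpyth hs ⊢
  field_simp
  linear_combination (c + s * I) * hpyth + (-c * s ^ 2 - s ^ 3 * I) * Complex.I_sq

lemma sin_half_ne_zero {η : ℝ} (h : η ∈ Ioo (-π) π \ {0}) : sin (η / 2) ≠ 0 := by
  obtain ⟨⟨h₁, h₂⟩, h₀⟩ := h
  rw [Ne, sin_eq_zero_iff_of_lt_of_lt (by linarith) (by linarith)]
  intro h
  exact h₀ (mem_singleton_iff.2 (by linarith))

namespace FractionalLaplacian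

def symbol (α η : ℝ) : ℝ := (4 * sin (η / 2) ^ 2) ^ (α / 2)

lemma continuous_symbol {α : ℝ} (hα : 0 ≤ α) : Continuous (symbol α) :=
  (by fun_prop : Continuous fun η : ℝ => 4 * sin (η / 2) ^ 2).rpow_const
    fun _ => Or.inr (by positivity)

lemma symbol_neg (α η : ℝ) : symbol α (-η) = symbol α η := by
  simp only [symbol, neg_div, sin_neg, neg_sq]

lemma hasDerivAt_symbol (α : ℝ) {η : ℝ} (h : sin (η / 2) ≠ 0) :
    HasDerivAt (symbol α) (α / 2 * (cos (η / 2) / sin (η / 2)) * symbol α η) η := by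
  have hbase : HasDerivAt (fun η : ℝ => 4 * sin (η / 2) ^ 2)
      (4 * (2 * sin (η / 2) * (cos (η / 2) * (1 / 2)))) η := by
    simpa using (((hasDerivAt_id η).div_const 2).sin.pow 2).const_mul 4
  have hpos : 0 < 4 * sin (η / 2) ^ 2 := by positivity
  refine (hbase.rpow_const (Or.inl hpos.ne')).congr_deriv ?_
  rw [symbol, Real.rpow_sub_one hpos.ne']
  field_simp

def weightIntegrand (α : ℝ) (m : ℤ) (η : ℝ) : ℂ := cexp (-I * m * η) * symbol α η

def weightIntegral (α : ℝ) (m : ℤ) : ℂ := ∫ η in -π..π, weightIntegrand α m η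

lemma continuous_weightIntegrand {α : ℝ} (hα : 0 ≤ α) (m : ℤ) :
    Continuous (weightIntegrand α m) := by
  have := continuous_symbol hα
  unfold weightIntegrand
  fun_prop

lemma weightIntegrand_sub_one (α : ℝ) (m : ℤ) (η : ℝ) :
    weightIntegrand α (m - 1) η = cexp (I * η) * weightIntegrand α m η := by
  rw [weightIntegrand, weightIntegrand, ← mul_assoc, ← Complex.exp_add]
  push_cast
  ring_nf

lemma weightIntegrand_neg_pi (α : ℝ) (m : ℤ) :
    weightIntegrand α m (-π) = weightIntegrand α m π := by
  rw [weightIntegrand, weightIntegrand, symbol_neg, Complex.exp_eq_exp_iff_exists_int.2 ⟨m, ?_⟩]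
  push_cast
  ring

lemma hasDerivAt_weightIntegrand (α : ℝ) (m : ℤ) {η : ℝ} (h : sin (η / 2) ≠ 0) :
    HasDerivAt (weightIntegrand α m)
      ((-I * m + α / 2 * ((cos (η / 2) / sin (η / 2) : ℝ) : ℂ)) * weightIntegrand α m η) η := by
  have hexp : HasDerivAt (fun x : ℝ => cexp (-I * m * x)) (cexp (-I * m * η) * (-I * m)) η := by
    simpa using ((hasDerivAt_id η).ofReal_comp.const_mul (-I * m)).cexp
  refine (hexp.mul (hasDerivAt_symbol α h).ofReal_comp).congr_deriv ?_
  simp only [weightIntegrand]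
  push_cast
  ring

lemma hasDerivAt_weightIntegrand_sub (α : ℝ) (n : ℤ) {η : ℝ} (h : sin (η / 2) ≠ 0) :
    HasDerivAt (fun x => weightIntegrand α (n - 1) x - weightIntegrand α n x)
      (I * (1 - n + α / 2) * weightIntegrand α (n - 1) η
        + I * (n + α / 2) * weightIntegrand α n η) η := by
  refine ((hasDerivAt_weightIntegrand α (n - 1) h).sub
    (hasDerivAt_weightIntegrand α n h)).congr_deriv ?_
  have hcot := exp_I_sub_one_mul_cot_half h
  rw [weightIntegrand_sub_one]
  generalize ((cos (η / 2) / sin (η / 2) : ℝ) : ℂ) = κ at hcot ⊢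
  push_cast
  linear_combination (α / 2 * weightIntegrand α n η) * hcot

lemma weightIntegral_recurrence {α : ℝ} (hα : 0 ≤ α) (n : ℤ) :
    (n + α / 2) * weightIntegral α n = (n - 1 - α / 2) * weightIntegral α (n - 1) := by
  have hint := fun m => (continuous_weightIntegrand hα m).intervalIntegrable (μ := volume) (-π) π
  have hFTC := integral_eq_of_hasDerivAt_off_countable_of_le _ _ (neg_le_self pi_pos.le)
    (countable_singleton 0)
    ((continuous_weightIntegrand hα _).sub (continuous_weightIntegrand hα _)).continuousOn
    (fun η hη => hasDerivAt_weightIntegrand_sub α n (sin_half_ne_zero hη))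
    (((hint (n - 1)).const_mul _).add ((hint n).const_mul _))
  rw [integral_add ((hint (n - 1)).const_mul _) ((hint n).const_mul _),
    intervalIntegral.integral_const_mul, intervalIntegral.integral_const_mul, ← weightIntegral,
    ← weightIntegral, Pi.sub_apply, Pi.sub_apply, weightIntegrand_neg_pi, weightIntegrand_neg_pi,
    sub_self] at hFTC
  linear_combination (-I) * hFTC +
    ((n + α / 2) * weightIntegral α n + (1 - n + α / 2) * weightIntegral α (n - 1)) * Complex.I_sq

lemma integral_symbol {α : ℝ} (hα : 0 ≤ α) :
    ∫ η in -π..π, symbol α η = 2 * π * Gamma (α + 1) / Gamma (α / 2 + 1) ^ 2 := by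
  have hint := fun a b => (continuous_symbol hα).intervalIntegrable (μ := volume) a b
  have heven : ∫ η in -π..0, symbol α η = ∫ η in 0..π, symbol α η := by
    simpa [symbol_neg] using (intervalIntegral.integral_comp_neg (a := 0) (b := π) (symbol α)).symm
  have hhalf : ∫ η in 0..π, symbol α η = 2 ^ α * ∫ θ in Ioo 0 π, sin (θ / 2) ^ α := by
    rw [intervalIntegral.integral_of_le pi_pos.le, integral_Ioc_eq_integral_Ioo,
      ← MeasureTheory.integral_const_mul]
    refine setIntegral_congr_fun measurableSet_Ioo fun θ hθ => ?_
    have hs : 0 ≤ sin (θ / 2) :=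
      sin_nonneg_of_nonneg_of_le_pi (by linarith [hθ.1]) (by linarith [hθ.2, pi_pos])
    rw [symbol, show 4 * sin (θ / 2) ^ 2 = (2 * sin (θ / 2)) ^ (2 : ℝ) by norm_num; ring,
      ← rpow_mul (by positivity), mul_div_cancel₀ _ two_ne_zero, mul_rpow zero_le_two hs]
  have hdup := Gamma_mul_Gamma_add_half ((α + 1) / 2)
  rw [show (α + 1) / 2 + 1 / 2 = α / 2 + 1 by ring, show 2 * ((α + 1) / 2) = α + 1 by ring,
    show 1 - (α + 1) = -α by ring, rpow_neg zero_le_two] at hdup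
  have hGamma : Gamma (α / 2 + 1) ≠ 0 := (Gamma_pos_of_pos (by positivity)).ne'
  have htwo : (2 : ℝ) ^ α ≠ 0 := (rpow_pos_of_pos two_pos α).ne'
  rw [← integral_add_adjacent_intervals (hint _ _) (hint _ _), heven, hhalf,
    integral_sin_half_rpow (by linarith), eq_div_of_mul_eq hGamma hdup]
  generalize Gamma (α / 2 + 1) = b at hGamma ⊢
  generalize (2 : ℝ) ^ α = t at htwo ⊢
  field_simp
  linear_combination 2 * mul_self_sqrt pi_pos.le

def gammaWeight (α : ℝ) (n : ℤ) : ℝ :=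
  (-1 : ℝ) ^ n * Gamma (α + 1) / (Gamma (α / 2 + n + 1) * Gamma (α / 2 - n + 1))

/-- No restriction on `α` is needed: with the convention `Γ(-k) = 0` for `k : ℕ`, the identity
`1 / Γ(s) = s / Γ(s + 1)` holds for every real `s`. -/
lemma gammaWeight_recurrence (α : ℝ) (n : ℤ) :
    (n + α / 2) * gammaWeight α n = (n - 1 - α / 2) * gammaWeight α (n - 1) := by
  have h₁ := inv_Gamma_eq_mul_inv_Gamma_add_one (α / 2 + n)
  have h₂ := inv_Gamma_eq_mul_inv_Gamma_add_one (α / 2 - n + 1)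
  rw [gammaWeight, gammaWeight, Int.cast_sub, Int.cast_one,
    zpow_sub_one₀ (by norm_num : (-1 : ℝ) ≠ 0), show α / 2 + (n - 1) + 1 = α / 2 + n by ring,
    show α / 2 - (n - 1) + 1 = α / 2 - n + 1 + 1 by ring]
  linear_combination ((n + α / 2) * (-1) ^ n * Gamma (α + 1) * (Gamma (α / 2 + n + 1))⁻¹) * h₂
    - ((α / 2 - n + 1) * (-1) ^ n * Gamma (α + 1) * (Gamma (α / 2 - n + 1 + 1))⁻¹) * h₁

lemma weightIntegral_zero {α : ℝ} (hα : 0 ≤ α) :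
    weightIntegral α 0 = ((2 * π * gammaWeight α 0 : ℝ) : ℂ) := by
  have hreal : weightIntegral α 0 = ((∫ η in -π..π, symbol α η : ℝ) : ℂ) := by
    simp [weightIntegral, weightIntegrand, intervalIntegral.integral_ofReal]
  rw [hreal, integral_symbol hα, gammaWeight]
  congr 1
  simp only [zpow_zero, Int.cast_zero, add_zero, sub_zero, one_mul]
  ring

lemma weightIntegral_eq {α : ℝ} (hα : 0 ≤ α) (n : ℤ) :
    weightIntegral α n = ((2 * π * gammaWeight α n : ℝ) : ℂ) := by
  refine congrFun (Int.eq_of_first_order_recurrence (c := fun n => (n : ℂ) + α / 2)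
    (d := fun n => n - 1 - α / 2) (v := fun n => ((2 * π * gammaWeight α n : ℝ) : ℂ))
    ?_ ?_ (weightIntegral_recurrence hα) ?_ (weightIntegral_zero hα)) n
  · intro n hn
    have hn : (1 : ℝ) ≤ n := by exact_mod_cast hn
    exact_mod_cast (by linarith : (0 : ℝ) < n + α / 2).ne'
  · intro n hn
    have hn : (n : ℝ) ≤ 0 := by exact_mod_cast hn
    exact_mod_cast (by linarith : (n : ℝ) - 1 - α / 2 < 0).ne
  · intro n
    have h := congrArg (fun x : ℝ => (x : ℂ)) (gammaWeight_recurrence α n)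
    push_cast at h ⊢
    linear_combination (2 * π : ℂ) * h

end FractionalLaplacian

theorem stmt9_general (α : ℝ) (hα0 : 0 < α) (n : ℤ) :
    aWeightC α n =
      ((((-1 : ℝ) ^ n * Real.Gamma (α + 1) /
        (Real.Gamma (α / 2 + n + 1) * Real.Gamma (α / 2 - n + 1))) : ℝ) : ℂ) := by
  change (1 / (2 * π)) • FractionalLaplacian.weightIntegral α n = _
  rw [FractionalLaplacian.weightIntegral_eq hα0.le, Complex.real_smul, ← Complex.ofReal_mul,
    FractionalLaplacian.gammaWeight, one_div, inv_mul_cancel_left₀ (by positivity)]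

/-- Closed form of the finite difference weights:
`a_n^{(α)} = (-1)^n Γ(α+1) / (Γ(α/2+n+1) Γ(α/2-n+1))`; in particular they are real. -/
theorem stmt9 (α : ℝ) (hα0 : 0 < α) (hα2 : α < 2) (n : ℤ) :
    aWeightC α n =
      ((((-1 : ℝ) ^ n * Real.Gamma (α + 1) /
        (Real.Gamma (α / 2 + n + 1) * Real.Gamma (α / 2 - n + 1))) : ℝ) : ℂ) :=
  stmt9_general α hα0 n
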